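/- (Forward comparison.) Let (a0, a2) and (â0, â2) be two solutions of the ODE system (instA2) on an interval [t*, T] ⊂ (0,∞). If a0(t*) < â0(t*) and a2(t*) > â2(t*) ≥ 0, then a0(t) < â0(t) and a2(t) > â2(t) ≥ 0 for all t ∈ [t*, T]. -/

import Mathlib

open Set

lemma gronwall_aux {f f' : ℝ → ℝ} {c a b : ℝ} (hab : a ≤ b)
    (hd : ∀ t ∈ Set.Icc a b, HasDerivAt f (f' t) t)
    (hf : ∀ t ∈ Set.Icc a b, c * f t ≤ f' t) :
    f a * Real.exp (-c * a) ≤ f b * Real.exp (-c * b) := by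
  set g : ℝ → ℝ := fun t => f t * Real.exp (-c * t) with hgdef
  have hgd : ∀ t ∈ Set.Icc a b, HasDerivAt g ((f' t - c * f t) * Real.exp (-c * t)) t := by
    intro t ht
    have h1 : HasDerivAt (fun s : ℝ => Real.exp (-c * s)) (-c * Real.exp (-c * t)) t := by
      have := ((hasDerivAt_id t).const_mul (-c)).exp
      simpa [mul_comm] using this
    have h2 := (hd t ht).fun_mul h1
    exact h2.congr_deriv (by ring)
  have hmono : MonotoneOn g (Set.Icc a b) := by
    apply monotoneOn_of_deriv_nonneg (convex_Icc a b)
    · exact fun t ht => (hgd t ht).continuousAt.continuousWithinAt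
    · exact fun t ht => (hgd t (interior_subset ht)).differentiableAt.differentiableWithinAt
    · intro t ht
      have ht' : t ∈ Set.Icc a b := interior_subset ht
      rw [(hgd t ht').deriv]
      have h3 := hf t ht'
      have h4 := Real.exp_pos (-c * t)
      nlinarith
  exact hmono (Set.left_mem_Icc.2 hab) (Set.right_mem_Icc.2 hab) hab

/-- A solution of the ODE system (instA2), with `μ² = u1² − u0²`:
`a0' = −(4λ/μ²)(a2²(u1 − u0) + a0·u1 + u0)`, `a2' = −(3/(2λ))·a2·(a0 + 1)`. -/
def IsSolInstA2 (u0 : ℝ) (lam u1 a0 a2 : ℝ → ℝ) (s : Set ℝ) : Prop :=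
  ∀ t ∈ s,
    HasDerivAt a0 (-(4 * lam t / (u1 t ^ 2 - u0 ^ 2)) *
      (a2 t ^ 2 * (u1 t - u0) + a0 t * u1 t + u0)) t ∧
    HasDerivAt a2 (-(3 / (2 * lam t)) * a2 t * (a0 t + 1)) t

/-- Forward comparison: if `(a0, a2)` and `(â0, â2)` are two solutions of (instA2) on
`[t*, T] ⊂ (0,∞)` with `a0(t*) < â0(t*)` and `a2(t*) > â2(t*) ≥ 0`, then
`a0(t) < â0(t)` and `a2(t) > â2(t) ≥ 0` for all `t ∈ [t*, T]`. -/
theorem forward_comparison_instA2 (u0 : ℝ) (lam u1 : ℝ → ℝ)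
    (hlamc : ContinuousOn lam (Ioi 0))
    (hlam : ∀ t ∈ Ioi (0 : ℝ), 0 < lam t)
    (hu1' : ∀ t ∈ Ioi (0 : ℝ), HasDerivAt u1 (2 * lam t) t)
    (hu1 : ∀ t ∈ Ioi (0 : ℝ), |u0| < u1 t)
    (a0 a2 b0 b2 : ℝ → ℝ) (tstar T : ℝ) (hts : 0 < tstar) (htT : tstar ≤ T)
    (hsola : IsSolInstA2 u0 lam u1 a0 a2 (Icc tstar T))
    (hsolb : IsSolInstA2 u0 lam u1 b0 b2 (Icc tstar T))
    (h0 : a0 tstar < b0 tstar) (h2 : a2 tstar > b2 tstar) (h2' : 0 ≤ b2 tstar) :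
    ∀ t ∈ Icc tstar T, a0 t < b0 t ∧ a2 t > b2 t ∧ 0 ≤ b2 t := by
  have hsub : Icc tstar T ⊆ Ioi (0 : ℝ) := fun t ht => lt_of_lt_of_le hts ht.1
  have hlam' : ∀ t ∈ Icc tstar T, 0 < lam t := fun t ht => hlam t (hsub ht)
  have hu1pos : ∀ t ∈ Icc tstar T, 0 < u1 t :=
    fun t ht => lt_of_le_of_lt (abs_nonneg u0) (hu1 t (hsub ht))
  have habs : ∀ t ∈ Icc tstar T, -u1 t < u0 ∧ u0 < u1 t := fun t ht => abs_lt.1 (hu1 t (hsub ht))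
  have hmu : ∀ t ∈ Icc tstar T, 0 < u1 t ^ 2 - u0 ^ 2 := by
    intro t ht
    obtain ⟨h1, h2⟩ := habs t ht
    nlinarith
  -- continuity of everything on the interval
  have hlamS : ContinuousOn lam (Icc tstar T) := hlamc.mono hsub
  have hu1S : ContinuousOn u1 (Icc tstar T) :=
    fun t ht => ((hu1' t (hsub ht)).continuousAt).continuousWithinAt
  have ha0S : ContinuousOn a0 (Icc tstar T) :=
    fun t ht => ((hsola t ht).1.continuousAt).continuousWithinAt
  have hb0S : ContinuousOn b0 (Icc tstar T) :=
    fun t ht => ((hsolb t ht).1.continuousAt).continuousWithinAt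
  have ha2S : ContinuousOn a2 (Icc tstar T) :=
    fun t ht => ((hsola t ht).2.continuousAt).continuousWithinAt
  have hb2S : ContinuousOn b2 (Icc tstar T) :=
    fun t ht => ((hsolb t ht).2.continuousAt).continuousWithinAt
  -- a uniform bound K on the coefficients
  set F : ℝ → ℝ := fun t => |4 * lam t * u1 t / (u1 t ^ 2 - u0 ^ 2)| +
      |3 / (2 * lam t) * (a0 t + 1)| + |3 / (2 * lam t) * (b0 t + 1)| with hFdef
  have hFc : ContinuousOn F (Icc tstar T) := by
    apply ContinuousOn.add
    apply ContinuousOn.add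
    · exact (((continuousOn_const.mul hlamS).mul hu1S).div
        ((hu1S.pow 2).sub continuousOn_const) (fun t ht => (hmu t ht).ne')).abs
    · exact ((continuousOn_const.div (continuousOn_const.mul hlamS)
        (fun t ht => (mul_pos two_pos (hlam' t ht)).ne')).mul
        (ha0S.add continuousOn_const)).abs
    · exact ((continuousOn_const.div (continuousOn_const.mul hlamS)
        (fun t ht => (mul_pos two_pos (hlam' t ht)).ne')).mul
        (hb0S.add continuousOn_const)).abs
  obtain ⟨K, hK⟩ := isCompact_Icc.exists_bound_of_continuousOn hFc
  have hKF : ∀ t ∈ Icc tstar T, F t ≤ K := fun t ht => (le_abs_self _).trans (hK t ht)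
  have hK1 : ∀ t ∈ Icc tstar T, |4 * lam t * u1 t / (u1 t ^ 2 - u0 ^ 2)| ≤ K := by
    intro t ht
    have h := hKF t ht
    have h1 := abs_nonneg (3 / (2 * lam t) * (a0 t + 1))
    have h2 := abs_nonneg (3 / (2 * lam t) * (b0 t + 1))
    simp only [hFdef] at h
    linarith
  have hK2 : ∀ t ∈ Icc tstar T, |3 / (2 * lam t) * (a0 t + 1)| ≤ K := by
    intro t ht
    have h := hKF t ht
    have h1 := abs_nonneg (4 * lam t * u1 t / (u1 t ^ 2 - u0 ^ 2))
    have h2 := abs_nonneg (3 / (2 * lam t) * (b0 t + 1))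
    simp only [hFdef] at h
    linarith
  have hK3 : ∀ t ∈ Icc tstar T, |3 / (2 * lam t) * (b0 t + 1)| ≤ K := by
    intro t ht
    have h := hKF t ht
    have h1 := abs_nonneg (4 * lam t * u1 t / (u1 t ^ 2 - u0 ^ 2))
    have h2 := abs_nonneg (3 / (2 * lam t) * (a0 t + 1))
    simp only [hFdef] at h
    linarith
  -- Step 1: b2 is nonnegative on the whole interval
  have hb2nn : ∀ t ∈ Icc tstar T, 0 ≤ b2 t := by
    intro t ht
    by_contra hneg
    push_neg at hneg
    have hts' : tstar ≤ t := ht.1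
    set A := {r | r ∈ Icc tstar t ∧ 0 ≤ b2 r} with hAdef
    have hIccsub : Icc tstar t ⊆ Icc tstar T := fun r hr => ⟨hr.1, le_trans hr.2 ht.2⟩
    have hAne : A.Nonempty := ⟨tstar, ⟨le_refl _, hts'⟩, h2'⟩
    have hAbdd : BddAbove A := (bddAbove_Icc (a := tstar) (b := t)).mono (fun r hr => hr.1)
    have hAclosed : IsClosed A := by
      have : A = Icc tstar t ∩ b2 ⁻¹' Ici 0 := by
        ext r; simp [hAdef, Set.mem_preimage, Set.mem_Ici, and_comm]
      rw [this]
      exact (hb2S.mono hIccsub).preimage_isClosed_of_isClosed isClosed_Icc isClosed_Ici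
    set τ := sSup A with hτdef
    have hτA : τ ∈ A := hAclosed.csSup_mem hAne hAbdd
    obtain ⟨⟨hτ1, hτ2⟩, hτb2⟩ := hτA
    have hτlt : τ < t := lt_of_le_of_ne hτ2 (fun h => by rw [h] at hτb2; linarith)
    have hτIcc : Icc τ t ⊆ Icc tstar T := fun r hr =>
      ⟨le_trans hτ1 hr.1, le_trans hr.2 ht.2⟩
    have hb2τ : b2 τ = 0 := by
      by_contra hne
      have hpos : 0 < b2 τ := lt_of_le_of_ne hτb2 (Ne.symm hne)
      have hcont : ContinuousAt b2 τ := (hsolb τ (hτIcc ⟨le_refl _, hτlt.le⟩)).2.continuousAt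
      have hmem : b2 ⁻¹' Ioi 0 ∈ nhds τ := hcont (Ioi_mem_nhds hpos)
      obtain ⟨ε, hε, hball⟩ := Metric.mem_nhds_iff.1 hmem
      set r := min (τ + ε / 2) t with hrdef
      have hrτ : τ < r := lt_min (by linarith) hτlt
      have hrball : r ∈ Metric.ball τ ε := by
        rw [Real.ball_eq_Ioo]
        exact ⟨by linarith, lt_of_le_of_lt (min_le_left _ _) (by linarith)⟩
      have hrA : r ∈ A := ⟨⟨le_trans hτ1 hrτ.le, min_le_right _ _⟩, (hball hrball).le⟩
      have := le_csSup hAbdd hrA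
      rw [← hτdef] at this
      linarith
    have hb2le : ∀ r ∈ Icc τ t, b2 r ≤ 0 := by
      intro r hr
      rcases eq_or_lt_of_le hr.1 with h | h
      · rw [← h, hb2τ]
      · by_contra hc
        push_neg at hc
        have hrA : r ∈ A := ⟨⟨le_trans hτ1 hr.1, hr.2⟩, hc.le⟩
        have := le_csSup hAbdd hrA
        rw [← hτdef] at this
        linarith
    have key := gronwall_aux (f := b2)
      (f' := fun r => -(3 / (2 * lam r)) * b2 r * (b0 r + 1)) (c := K) hτlt.le
      (fun r hr => (hsolb r (hτIcc hr)).2)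
      (fun r hr => by
        have hb2r := hb2le r hr
        have hcb := abs_le.1 (hK3 r (hτIcc hr))
        have e : -(3 / (2 * lam r)) * b2 r * (b0 r + 1)
            = (K + 3 / (2 * lam r) * (b0 r + 1)) * (-b2 r) + K * b2 r := by ring
        beta_reduce
        rw [e]
        have h1 : 0 ≤ (K + 3 / (2 * lam r) * (b0 r + 1)) * (-b2 r) :=
          mul_nonneg (by linarith [hcb.1]) (by linarith)
        linarith)
    rw [hb2τ, zero_mul] at key
    nlinarith [Real.exp_pos (-K * t), key]
  -- Step 2: strict comparison
  have hmain : ∀ t ∈ Icc tstar T, a0 t < b0 t ∧ b2 t < a2 t := by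
    by_contra hc
    push_neg at hc
    obtain ⟨t, ht, hbad⟩ := hc
    set B := {r | r ∈ Icc tstar T ∧ (b0 r - a0 r ≤ 0 ∨ a2 r - b2 r ≤ 0)} with hBdef
    have hBne : B.Nonempty := by
      refine ⟨t, ht, ?_⟩
      by_cases h : a0 t < b0 t
      · exact Or.inr (by linarith [hbad h])
      · exact Or.inl (by push_neg at h; linarith)
    have hBbdd : BddBelow B := (bddBelow_Icc (a := T) (b := tstar)).mono (fun r hr => hr.1)
    have hBclosed : IsClosed B := by
      have : B = (Icc tstar T ∩ (fun r => b0 r - a0 r) ⁻¹' Iic 0) ∪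
          (Icc tstar T ∩ (fun r => a2 r - b2 r) ⁻¹' Iic 0) := by
        ext r
        simp only [hBdef, Set.mem_setOf_eq, Set.mem_union, Set.mem_inter_iff,
          Set.mem_preimage, Set.mem_Iic]
        tauto
      rw [this]
      exact ((hb0S.sub ha0S).preimage_isClosed_of_isClosed isClosed_Icc isClosed_Iic).union
        ((ha2S.sub hb2S).preimage_isClosed_of_isClosed isClosed_Icc isClosed_Iic)
    set τ := sInf B with hτdef
    have hτB : τ ∈ B := hBclosed.csInf_mem hBne hBbdd
    obtain ⟨⟨hτ1, hτ2⟩, hτbad⟩ := hτB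
    have hτstar : tstar < τ := by
      rcases eq_or_lt_of_le hτ1 with h | h
      · exfalso
        rcases hτbad with h' | h' <;> rw [← h] at h' <;> linarith
      · exact h
    have hτS : τ ∈ Icc tstar T := ⟨hτ1, hτ2⟩
    have hIccsub : Icc tstar τ ⊆ Icc tstar T := fun r hr => ⟨hr.1, le_trans hr.2 hτ2⟩
    have hpos : ∀ r ∈ Ico tstar τ, 0 < b0 r - a0 r ∧ 0 < a2 r - b2 r := by
      intro r hr
      by_contra h
      push_neg at h
      have hrB : r ∈ B := by
        refine ⟨⟨hr.1, le_trans hr.2.le hτ2⟩, ?_⟩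
        rcases le_or_gt (b0 r - a0 r) 0 with h' | h'
        · exact Or.inl h'
        · exact Or.inr (h h')
      have := csInf_le hBbdd hrB
      rw [← hτdef] at this
      exact absurd hr.2 (not_lt.2 this)
    have hD0τ : 0 ≤ b0 τ - a0 τ := by
      have hcont : ContinuousWithinAt (fun r => b0 r - a0 r) (Iio τ) τ :=
        ((hsolb τ hτS).1.sub (hsola τ hτS).1).continuousAt.continuousWithinAt
      refine ge_of_tendsto hcont ?_
      filter_upwards [Ioo_mem_nhdsLT_of_mem (show τ ∈ Ioc tstar τ from ⟨hτstar, le_refl _⟩)]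
        with r hr
      exact (hpos r ⟨hr.1.le, hr.2⟩).1.le
    have hD2τ : 0 ≤ a2 τ - b2 τ := by
      have hcont : ContinuousWithinAt (fun r => a2 r - b2 r) (Iio τ) τ :=
        ((hsola τ hτS).2.sub (hsolb τ hτS).2).continuousAt.continuousWithinAt
      refine ge_of_tendsto hcont ?_
      filter_upwards [Ioo_mem_nhdsLT_of_mem (show τ ∈ Ioc tstar τ from ⟨hτstar, le_refl _⟩)]
        with r hr
      exact (hpos r ⟨hr.1.le, hr.2⟩).2.le
    have hD0nn : ∀ r ∈ Icc tstar τ, 0 ≤ b0 r - a0 r := by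
      intro r hr
      rcases lt_or_eq_of_le hr.2 with h | h
      · exact (hpos r ⟨hr.1, h⟩).1.le
      · rw [h]; exact hD0τ
    have hD2nn : ∀ r ∈ Icc tstar τ, 0 ≤ a2 r - b2 r := by
      intro r hr
      rcases lt_or_eq_of_le hr.2 with h | h
      · exact (hpos r ⟨hr.1, h⟩).2.le
      · rw [h]; exact hD2τ
    have key0 := gronwall_aux (f := fun r => b0 r - a0 r)
      (f' := fun r => (-(4 * lam r / (u1 r ^ 2 - u0 ^ 2)) *
          (b2 r ^ 2 * (u1 r - u0) + b0 r * u1 r + u0)) -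
        (-(4 * lam r / (u1 r ^ 2 - u0 ^ 2)) *
          (a2 r ^ 2 * (u1 r - u0) + a0 r * u1 r + u0))) (c := -K) hτstar.le
      (fun r hr => ((hsolb r (hIccsub hr)).1).sub ((hsola r (hIccsub hr)).1))
      (fun r hr => by
        have hrS := hIccsub hr
        have hL : 0 < 4 * lam r / (u1 r ^ 2 - u0 ^ 2) := by
          have := hlam' r hrS; have := hmu r hrS; positivity
        obtain ⟨hab1, hab2⟩ := habs r hrS
        have hb2r := hb2nn r hrS
        have hD2r := hD2nn r hr
        have hD0r := hD0nn r hr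
        have hKb := (abs_le.1 (hK1 r hrS)).2
        have h1 : 0 ≤ (4 * lam r / (u1 r ^ 2 - u0 ^ 2)) * (u1 r - u0) :=
          mul_nonneg hL.le (by linarith)
        have h2 : 0 ≤ (a2 r + b2 r) * (a2 r - b2 r) :=
          mul_nonneg (by linarith) (by linarith)
        have h3 : 0 ≤ (K - 4 * lam r * u1 r / (u1 r ^ 2 - u0 ^ 2)) * (b0 r - a0 r) :=
          mul_nonneg (by linarith) hD0r
        have e : -(4 * lam r / (u1 r ^ 2 - u0 ^ 2)) *
              (b2 r ^ 2 * (u1 r - u0) + b0 r * u1 r + u0) -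
            -(4 * lam r / (u1 r ^ 2 - u0 ^ 2)) *
              (a2 r ^ 2 * (u1 r - u0) + a0 r * u1 r + u0)
            = (4 * lam r / (u1 r ^ 2 - u0 ^ 2) * (u1 r - u0)) *
                ((a2 r + b2 r) * (a2 r - b2 r)) +
              ((K - 4 * lam r * u1 r / (u1 r ^ 2 - u0 ^ 2)) * (b0 r - a0 r)) +
              (-K * (b0 r - a0 r)) := by ring
        beta_reduce
        rw [e]
        nlinarith [mul_nonneg h1 h2])
    have key2 := gronwall_aux (f := fun r => a2 r - b2 r)
      (f' := fun r => (-(3 / (2 * lam r)) * a2 r * (a0 r + 1)) -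
        (-(3 / (2 * lam r)) * b2 r * (b0 r + 1))) (c := -K) hτstar.le
      (fun r hr => ((hsola r (hIccsub hr)).2).sub ((hsolb r (hIccsub hr)).2))
      (fun r hr => by
        have hrS := hIccsub hr
        have hl : 0 < lam r := hlam' r hrS
        have hhalf : 0 ≤ 3 / (2 * lam r) := by positivity
        have hb2r := hb2nn r hrS
        have hD2r := hD2nn r hr
        have hD0r := hD0nn r hr
        have hKc := (abs_le.1 (hK2 r hrS)).2
        have h1 : 0 ≤ (K - 3 / (2 * lam r) * (a0 r + 1)) * (a2 r - b2 r) :=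
          mul_nonneg (by linarith) hD2r
        have h2 : 0 ≤ (3 / (2 * lam r)) * b2 r * (b0 r - a0 r) :=
          mul_nonneg (mul_nonneg hhalf hb2r) hD0r
        have e : -(3 / (2 * lam r)) * a2 r * (a0 r + 1) -
            -(3 / (2 * lam r)) * b2 r * (b0 r + 1)
            = (K - 3 / (2 * lam r) * (a0 r + 1)) * (a2 r - b2 r) +
              (3 / (2 * lam r)) * b2 r * (b0 r - a0 r) +
              (-K * (a2 r - b2 r)) := by ring
        beta_reduce
        rw [e]
        linarith)
    simp only [neg_neg] at key0 key2
    have he1 := Real.exp_pos (K * tstar)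
    have he2 := Real.exp_pos (K * τ)
    have hp0 : 0 < (b0 τ - a0 τ) * Real.exp (K * τ) :=
      lt_of_lt_of_le (by nlinarith) key0
    have hp2 : 0 < (a2 τ - b2 τ) * Real.exp (K * τ) :=
      lt_of_lt_of_le (by nlinarith) key2
    rcases hτbad with h' | h' <;> nlinarith
  intro t ht
  exact ⟨(hmain t ht).1, (hmain t ht).2, hb2nn t ht⟩
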